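/- For a depth-d feedforward network y(x) = σ_d(A_d σ_{d-1}(A_{d-1} ⋯ σ₁(A₁x)⋯)) with all activations continuously differentiable, σ₁ elementwise, and input X with density p admitting a score function (with Stein regularity holding), the cross-moment matrix M = E[y(X)(∇ log p(X))ᵀ] factorizes as M = -E[Dσ_d(x̃_d) A_d Dσ_{d-1}(x̃_{d-1}) A_{d-1} ⋯ Dσ₂(x̃₂) A₂ diag(σ₁'(x̃₁))] · A₁, where x̃ᵢ denotes the pre-activation input to layer i. -/

import Mathlib

/-!
By Stein's identity the cross-moment `M` is minus the expected Jacobian of the network output.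
The chain rule writes that Jacobian as `Dσ_d(x̃_d) A_d ⋯ diag(σ₁'(x̃₁)) A₁`, and since `A₁` is
constant it leaves the expectation.
-/

open MeasureTheory Matrix

theorem differentiable_mulVec {ι κ : Type*} [Fintype ι] (A : Matrix κ ι ℝ) :
    Differentiable ℝ (A *ᵥ ·) :=
  (LinearMap.toContinuousLinearMap A.mulVecLin).differentiable

section Jacobian

variable {ι κ ν : Type*} [Fintype ι] [DecidableEq ι]

noncomputable def jacobian (f : (ι → ℝ) → κ → ℝ) (x : ι → ℝ) : Matrix κ ι ℝ :=
  LinearMap.toMatrix' (fderiv ℝ f x : (ι → ℝ) →ₗ[ℝ] κ → ℝ)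

theorem jacobian_apply {f : (ι → ℝ) → κ → ℝ} {x : ι → ℝ} (hf : DifferentiableAt ℝ f x)
    (a : κ) (b : ι) : jacobian f x a b = fderiv ℝ (fun y => f y a) x (Pi.single b 1) := by
  rw [jacobian, LinearMap.toMatrix'_apply, fderiv_apply hf]
  rfl

theorem jacobian_comp [Fintype κ] [DecidableEq κ] [Fintype ν] {g : (ι → ℝ) → κ → ℝ}
    {f : (κ → ℝ) → ν → ℝ} {x : ι → ℝ} (hf : DifferentiableAt ℝ f (g x))
    (hg : DifferentiableAt ℝ g x) : jacobian (f ∘ g) x = jacobian f (g x) * jacobian g x := by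
  rw [jacobian, fderiv_comp x hf hg, ContinuousLinearMap.toLinearMap_comp,
    LinearMap.toMatrix'_comp]
  rfl

theorem jacobian_id (x : ι → ℝ) : jacobian id x = 1 := by
  rw [jacobian, fderiv_id, ContinuousLinearMap.coe_id, LinearMap.toMatrix'_id]

theorem jacobian_mulVec (A : Matrix κ ι ℝ) (x : ι → ℝ) : jacobian (A *ᵥ ·) x = A := by
  unfold jacobian
  erw [(LinearMap.toContinuousLinearMap A.mulVecLin).fderiv]
  exact LinearMap.toMatrix'_toLin' A

theorem jacobian_map_apply {s : ℝ → ℝ} {u : ι → ℝ} (hs : ∀ l, DifferentiableAt ℝ s (u l)) :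
    jacobian (fun v l => s (v l)) u = diagonal fun l => deriv s (u l) := by
  have hd : ∀ l, HasFDerivAt (fun v : ι → ℝ => s (v l))
      (deriv s (u l) • ContinuousLinearMap.proj (R := ℝ) (φ := fun _ : ι => ℝ) l) u :=
    fun l => (hs l).hasDerivAt.comp_hasFDerivAt u (hasFDerivAt_apply l u)
  ext a b
  rw [jacobian, (hasFDerivAt_pi.2 hd).fderiv, LinearMap.toMatrix'_apply]
  simp [diagonal_apply, Pi.single_apply]

end Jacobian

theorem integral_matrix_mul_apply {ι κ ν Ω : Type*} [Fintype ι] [MeasurableSpace Ω]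
    {μ : Measure Ω} {F : Ω → Matrix κ ι ℝ} (hF : ∀ a b, Integrable (fun x => F x a b) μ)
    (B : Matrix ι ν ℝ) (a : κ) (c : ν) :
    ∫ x, (F x * B) a c ∂μ = ∑ b, (∫ x, F x a b ∂μ) * B b c := by
  simp_rw [mul_apply]
  rw [integral_finsetSum _ fun b _ => (hF a b).mul_const _]
  simp_rw [integral_mul_const]

section Network

variable {ι : ℕ → Type*} [∀ i, Fintype (ι i)]
  {A : ∀ i, Matrix (ι (i + 1)) (ι i) ℝ} {σ : ∀ i, (ι (i + 1) → ℝ) → ι (i + 1) → ℝ}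
  {net : ∀ i, (ι 0 → ℝ) → ι i → ℝ}

theorem differentiable_network (hσ : ∀ i, Differentiable ℝ (σ i)) (hnet0 : ∀ x, net 0 x = x)
    (hnetstep : ∀ i x, net (i + 1) x = σ i (A i *ᵥ net i x)) (i : ℕ) :
    Differentiable ℝ (net i) := by
  induction i with
  | zero => exact (show net 0 = id from funext hnet0) ▸ differentiable_id
  | succ i ih =>
    rw [funext (hnetstep i)]
    exact (hσ i).comp ((differentiable_mulVec (A i)).comp ih)

theorem jacobian_network_succ [∀ i, DecidableEq (ι i)] (hσ : ∀ i, Differentiable ℝ (σ i))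
    (hnet0 : ∀ x, net 0 x = x)
    (hnetstep : ∀ i x, net (i + 1) x = σ i (A i *ᵥ net i x)) (i : ℕ) (x : ι 0 → ℝ) :
    jacobian (net (i + 1)) x = jacobian (σ i) (A i *ᵥ net i x) * (A i * jacobian (net i) x) := by
  have hnet := differentiable_network hσ hnet0 hnetstep i
  rw [show net (i + 1) = σ i ∘ (A i *ᵥ ·) ∘ net i from funext (hnetstep i),
    jacobian_comp ((hσ i) _) ((differentiable_mulVec _).comp hnet x),
    jacobian_comp ((differentiable_mulVec _) _) (hnet x), jacobian_mulVec]
  rfl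

theorem jacobian_network_eq_mul [∀ i, DecidableEq (ι i)] {s : ℝ → ℝ}
    {P : ∀ i, (ι 0 → ℝ) → Matrix (ι (i + 1)) (ι 1) ℝ}
    (hs : Differentiable ℝ s) (hσ : ∀ i, Differentiable ℝ (σ i))
    (hσ0 : ∀ v l, σ 0 v l = s (v l)) (hnet0 : ∀ x, net 0 x = x)
    (hnetstep : ∀ i x, net (i + 1) x = σ i (A i *ᵥ net i x))
    (hP0 : ∀ x, P 0 x = diagonal fun l => deriv s ((A 0 *ᵥ x) l))
    (hPstep : ∀ i x, P (i + 1) x =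
      (of fun a b => fderiv ℝ (fun v => σ (i + 1) v a) (A (i + 1) *ᵥ net (i + 1) x)
          (Pi.single b 1)) * (A (i + 1) * P i x))
    (i : ℕ) (x : ι 0 → ℝ) : jacobian (net (i + 1)) x = P i x * A 0 := by
  induction i with
  | zero =>
    rw [jacobian_network_succ hσ hnet0 hnetstep, hnet0, show net 0 = id from funext hnet0,
      jacobian_id, Matrix.mul_one, funext₂ hσ0, jacobian_map_apply fun _ => hs _, hP0]
  | succ i ih =>
    have hσjac : jacobian (σ (i + 1)) (A (i + 1) *ᵥ net (i + 1) x) =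
        of fun a b => fderiv ℝ (fun v => σ (i + 1) v a) (A (i + 1) *ᵥ net (i + 1) x)
          (Pi.single b 1) := by
      ext a b
      exact jacobian_apply ((hσ (i + 1)) _) a b
    rw [jacobian_network_succ hσ hnet0 hnetstep, ih, hσjac, hPstep]
    simp only [Matrix.mul_assoc]

end Network

theorem deep_network_moment_factorization_general (d : ℕ) (dims : ℕ → ℕ)
    (p : (Fin (dims 0) → ℝ) → ℝ) (s : ℝ → ℝ)
    (A : ∀ i : ℕ, Matrix (Fin (dims (i + 1))) (Fin (dims i)) ℝ)
    (σ : ∀ i : ℕ, (Fin (dims (i + 1)) → ℝ) → (Fin (dims (i + 1)) → ℝ))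
    (net : ∀ i : ℕ, (Fin (dims 0) → ℝ) → (Fin (dims i) → ℝ))
    (P : ∀ i : ℕ, (Fin (dims 0) → ℝ) → Matrix (Fin (dims (i + 1))) (Fin (dims 1)) ℝ)
    (μ : Measure (Fin (dims 0) → ℝ))
    (hs : ContDiff ℝ 1 s) (hσ : ∀ i, ContDiff ℝ 1 (σ i))
    -- the first layer activation is elementwise
    (hσ0 : ∀ v l, σ 0 v l = s (v l))
    -- recursive definition of the network
    (hnet0 : ∀ x, net 0 x = x)
    (hnetstep : ∀ i x, net (i + 1) x = σ i ((A i).mulVec (net i x)))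
    -- recursive definition of the product of Jacobians
    (hP0 : ∀ x, P 0 x = Matrix.diagonal fun l => deriv s ((A 0).mulVec x l))
    (hPstep : ∀ i x, P (i + 1) x =
      (Matrix.of fun a b =>
        fderiv ℝ (fun v => σ (i + 1) v a) ((A (i + 1)).mulVec (net (i + 1) x))
          (Pi.single b 1)) * ((A (i + 1)) * P i x))
    (M : Matrix (Fin (dims (d + 1))) (Fin (dims 0)) ℝ)
    (hM : ∀ i j, M i j = ∫ x,
      net (d + 1) x i * fderiv ℝ (fun y => Real.log (p y)) x (Pi.single j 1) ∂μ)
    -- Stein regularity: the integration-by-parts identity holds for the network output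
    (hStein : ∀ i j, (∫ x,
        net (d + 1) x i * fderiv ℝ (fun y => Real.log (p y)) x (Pi.single j 1) ∂μ)
      = -∫ x, fderiv ℝ (fun y => net (d + 1) y i) x (Pi.single j 1) ∂μ)
    (hPint : ∀ i l, Integrable (fun x => P d x i l) μ) :
    ∀ i j, M i j = -∑ l, (∫ x, P d x i l ∂μ) * A 0 l j := by
  intro i j
  have hsd : Differentiable ℝ s := hs.differentiable one_ne_zero
  have hσd : ∀ i, Differentiable ℝ (σ i) := fun i => (hσ i).differentiable one_ne_zero
  have hnet := differentiable_network (ι := fun i => Fin (dims i)) hσd hnet0 hnetstep (d + 1)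
  have hjac := jacobian_network_eq_mul (ι := fun i => Fin (dims i)) hsd hσd hσ0 hnet0 hnetstep
    hP0 hPstep d
  calc M i j = -∫ x, jacobian (net (d + 1)) x i j ∂μ := by
        simp_rw [hM, hStein, jacobian_apply (hnet _)]
    _ = -∫ x, (P d x * A 0) i j ∂μ := by simp_rw [hjac]
    _ = -∑ l, (∫ x, P d x i l ∂μ) * A 0 l j := by rw [integral_matrix_mul_apply hPint]

/-- Moment factorization for a depth-`d+1` feedforward network: the label–score cross-moment
matrix factorizes as `M = -E[Dσ_d(x̃_d) A_d ⋯ Dσ₂(x̃₂) A₂ diag(σ₁'(x̃₁))] A₁`.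
Here `net i` is the output after `i` layers and `P i` is the product of Jacobians of layers
`2, …, i+1` times `diag(σ₁'(A₁ x))`. -/
theorem deep_network_moment_factorization (d : ℕ) (dims : ℕ → ℕ)
    (p : (Fin (dims 0) → ℝ) → ℝ) (s : ℝ → ℝ)
    (A : ∀ i : ℕ, Matrix (Fin (dims (i + 1))) (Fin (dims i)) ℝ)
    (σ : ∀ i : ℕ, (Fin (dims (i + 1)) → ℝ) → (Fin (dims (i + 1)) → ℝ))
    (net : ∀ i : ℕ, (Fin (dims 0) → ℝ) → (Fin (dims i) → ℝ))
    (P : ∀ i : ℕ, (Fin (dims 0) → ℝ) → Matrix (Fin (dims (i + 1))) (Fin (dims 1)) ℝ)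
    (μ : Measure (Fin (dims 0) → ℝ))
    (hμ : μ = volume.withDensity fun x => ENNReal.ofReal (p x))
    (hp : ContDiff ℝ 1 p) (hppos : ∀ x, 0 < p x) (hpint : ∫ x, p x = 1)
    (hs : ContDiff ℝ 1 s) (hσ : ∀ i, ContDiff ℝ 1 (σ i))
    -- the first layer activation is elementwise
    (hσ0 : ∀ v l, σ 0 v l = s (v l))
    -- recursive definition of the network
    (hnet0 : ∀ x, net 0 x = x)
    (hnetstep : ∀ i x, net (i + 1) x = σ i ((A i).mulVec (net i x)))
    -- recursive definition of the product of Jacobians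
    (hP0 : ∀ x, P 0 x = Matrix.diagonal fun l => deriv s ((A 0).mulVec x l))
    (hPstep : ∀ i x, P (i + 1) x =
      (Matrix.of fun a b =>
        fderiv ℝ (fun v => σ (i + 1) v a) ((A (i + 1)).mulVec (net (i + 1) x))
          (Pi.single b 1)) * ((A (i + 1)) * P i x))
    (M : Matrix (Fin (dims (d + 1))) (Fin (dims 0)) ℝ)
    (hM : ∀ i j, M i j = ∫ x,
      net (d + 1) x i * fderiv ℝ (fun y => Real.log (p y)) x (Pi.single j 1) ∂μ)
    -- Stein regularity: the integration-by-parts identity holds for the network output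
    (hStein : ∀ i j, (∫ x,
        net (d + 1) x i * fderiv ℝ (fun y => Real.log (p y)) x (Pi.single j 1) ∂μ)
      = -∫ x, fderiv ℝ (fun y => net (d + 1) y i) x (Pi.single j 1) ∂μ)
    (hPint : ∀ i l, Integrable (fun x => P d x i l) μ) :
    ∀ i j, M i j = -∑ l, (∫ x, P d x i l ∂μ) * A 0 l j :=
  deep_network_moment_factorization_general d dims p s A σ net P μ hs hσ hσ0 hnet0 hnetstep hP0
    hPstep M hM hStein hPint
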